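/- Stability of vanishing of spectral idempotents for Banach-space representations (classical content of the paper's Lemma on spectrum continuity in the Banach setting): let G be a compact topological group with Haar probability measure μ, E a complex Banach space, and χ : G → 𝕋 a continuous character. If ρ and ρ' are norm-continuous representations of G on E with sup_{g ∈ G} ‖ρ(g) − ρ'(g)‖ < 1, then P_χ(ρ) = 0 if and only if P_χ(ρ') = 0. -/

import Mathlib

/-!
Left invariance of the Haar measure gives `ρ g * P_χ(ρ) = χ g • P_χ(ρ)`, so integrating
`χ(g)⁻¹ ρ(g) P_χ(ρ)` returns `P_χ(ρ)`: the spectral idempotent is idempotent. A nonzero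
idempotent has norm at least `1`, since `‖P‖ = ‖P * P‖ ≤ ‖P‖²`, whereas
`‖P_χ(ρ) - P_χ(ρ')‖ ≤ sup_g ‖ρ g - ρ' g‖ < 1`; hence one vanishes iff the other does.
-/

open MeasureTheory

theorem IsIdempotentElem.one_le_norm {A : Type*} [NormedRing A] {p : A} (hp : IsIdempotentElem p)
    (h : p ≠ 0) : 1 ≤ ‖p‖ := by
  have : ‖p‖ * 1 ≤ ‖p‖ * ‖p‖ := by simpa [hp.eq] using norm_mul_le p p
  exact le_of_mul_le_mul_left this (norm_pos_iff.mpr h)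

theorem IsIdempotentElem.eq_zero_iff_of_norm_sub_lt_one {A : Type*} [NormedRing A] {p q : A}
    (hp : IsIdempotentElem p) (hq : IsIdempotentElem q) (hpq : ‖p - q‖ < 1) :
    p = 0 ↔ q = 0 := by
  constructor
  · rintro rfl
    by_contra hq0
    exact (hq.one_le_norm hq0).not_gt (by simpa using hpq)
  · rintro rfl
    by_contra hp0
    exact (hp.one_le_norm hp0).not_gt (by simpa using hpq)

section SpectralIdempotent

variable {G : Type*} [Group G] [TopologicalSpace G]
  {A : Type*} [NormedRing A] [NormedAlgebra ℂ A] (χ : ContinuousMonoidHom G Circle)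

theorem continuous_inv_circle_smul {F : Type*} [NormedAddCommGroup F] [NormedSpace ℂ F]
    {f : G → F} (hf : Continuous f) : Continuous fun g => (((χ g)⁻¹ : Circle) : ℂ) • f g := by
  fun_prop

variable [CompactSpace G] [MeasurableSpace G] [BorelSpace G]
  (μ : Measure G) [IsProbabilityMeasure μ]

noncomputable def spectralIdempotent (ρ : G →* Aˣ) : A :=
  ∫ g, (((χ g)⁻¹ : Circle) : ℂ) • (ρ g : A) ∂μ

variable {μ χ}

theorem integrable_inv_circle_smul {ρ : G →* Aˣ} (hρ : Continuous fun g => (ρ g : A)) :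
    Integrable (fun g => (((χ g)⁻¹ : Circle) : ℂ) • (ρ g : A)) μ :=
  (continuous_inv_circle_smul χ hρ).integrable_of_hasCompactSupport
    (HasCompactSupport.of_compactSpace _)

theorem apply_mul_spectralIdempotent [MeasurableMul G] [μ.IsMulLeftInvariant] {ρ : G →* Aˣ}
    (hρ : Continuous fun g => (ρ g : A)) (g : G) :
    (ρ g : A) * spectralIdempotent χ μ ρ = ((χ g : Circle) : ℂ) • spectralIdempotent χ μ ρ := by
  have htwist : ∀ h, (ρ g : A) * ((((χ h)⁻¹ : Circle) : ℂ) • (ρ h : A)) =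
      ((χ g : Circle) : ℂ) • ((((χ (g * h))⁻¹ : Circle) : ℂ) • (ρ (g * h) : A)) := by
    intro h
    rw [mul_smul_comm, smul_smul, ← Circle.coe_mul, map_mul, map_mul, Units.val_mul, mul_inv,
      mul_inv_cancel_left]
  rw [spectralIdempotent, ← integral_const_mul_of_integrable (integrable_inv_circle_smul hρ)]
  simp_rw [htwist]
  rw [integral_smul,
    integral_mul_left_eq_self (fun h => (((χ h)⁻¹ : Circle) : ℂ) • (ρ h : A))]

theorem isIdempotentElem_spectralIdempotent [CompleteSpace A] [MeasurableMul G]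
    [μ.IsMulLeftInvariant] {ρ : G →* Aˣ} (hρ : Continuous fun g => (ρ g : A)) :
    IsIdempotentElem (spectralIdempotent χ μ ρ) := by
  set P := spectralIdempotent χ μ ρ
  have hconst : ∀ g, ((((χ g)⁻¹ : Circle) : ℂ) • (ρ g : A)) * P = P := by
    intro g
    rw [smul_mul_assoc, apply_mul_spectralIdempotent hρ, smul_smul, ← Circle.coe_mul,
      inv_mul_cancel, Circle.coe_one, one_smul]
  calc P * P = ∫ g, ((((χ g)⁻¹ : Circle) : ℂ) • (ρ g : A)) * P ∂μ :=
        (integral_mul_const_of_integrable (integrable_inv_circle_smul hρ)).symm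
    _ = P := by simp only [hconst]; rw [integral_const, probReal_univ, one_smul]

theorem norm_spectralIdempotent_sub_le {ρ ρ' : G →* Aˣ} (hρ : Continuous fun g => (ρ g : A))
    (hρ' : Continuous fun g => (ρ' g : A)) :
    ‖spectralIdempotent χ μ ρ - spectralIdempotent χ μ ρ'‖ ≤ ⨆ g, ‖(ρ g : A) - ρ' g‖ := by
  have hbdd : BddAbove (Set.range fun g => ‖(ρ g : A) - ρ' g‖) :=
    (isCompact_range (hρ.sub hρ').norm).bddAbove
  have hpointwise : ∀ g,
      ‖(((χ g)⁻¹ : Circle) : ℂ) • (ρ g : A) - (((χ g)⁻¹ : Circle) : ℂ) • ρ' g‖ ≤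
        ⨆ g, ‖(ρ g : A) - ρ' g‖ := by
    intro g
    rw [← smul_sub, norm_smul, Circle.norm_coe, one_mul]
    exact le_ciSup hbdd g
  rw [spectralIdempotent, spectralIdempotent,
    ← integral_sub (integrable_inv_circle_smul hρ) (integrable_inv_circle_smul hρ')]
  simpa using norm_integral_le_of_norm_le_const (μ := μ) (Filter.Eventually.of_forall hpointwise)

end SpectralIdempotent

theorem spectral_idempotent_vanishing_stable_banach
    {G : Type*} [Group G] [TopologicalSpace G] [IsTopologicalGroup G] [CompactSpace G]
    [MeasurableSpace G] [BorelSpace G]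
    (μ : Measure G) [μ.IsHaarMeasure] [IsProbabilityMeasure μ]
    {E : Type*} [NormedAddCommGroup E] [NormedSpace ℂ E] [CompleteSpace E]
    (χ : ContinuousMonoidHom G Circle)
    (ρ ρ' : G →* (E →L[ℂ] E)ˣ)
    (hρ : Continuous fun g : G => (ρ g : E →L[ℂ] E))
    (hρ' : Continuous fun g : G => (ρ' g : E →L[ℂ] E))
    (hclose : (⨆ g : G, ‖(ρ g : E →L[ℂ] E) - (ρ' g : E →L[ℂ] E)‖) < 1) :
    (∫ g, (((χ g)⁻¹ : Circle) : ℂ) • (ρ g : E →L[ℂ] E) ∂μ) = 0 ↔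
      (∫ g, (((χ g)⁻¹ : Circle) : ℂ) • (ρ' g : E →L[ℂ] E) ∂μ) = 0 :=
  (isIdempotentElem_spectralIdempotent (μ := μ) (χ := χ) hρ).eq_zero_iff_of_norm_sub_lt_one
    (isIdempotentElem_spectralIdempotent hρ')
    ((norm_spectralIdempotent_sub_le hρ hρ').trans_lt hclose)
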